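/- Let F be a one-dimensional cellular automaton on alphabet A with |A| ≥ 2, and p ≥ 2 an integer. If (x₁, y) and (x₂, y) are two points of X_p(F) with the same second coordinate y > 0 and x₁ ≠ x₂, then F is surjective. -/

import Mathlib

open Filter Function

/-- Configuration `c` with cell 0 replaced by `q`. -/
def phiCfg {A : Type*} (c : ℤ → A) (q : A) : ℤ → A := fun z => if z = 0 then q else c z

/-- Property B(x,y,l,r) for a map on configurations. -/
def propB {A : Type*} (F : (ℤ → A) → (ℤ → A)) (x : ℤ) (y l r : ℕ) : Prop :=
  (∀ c : ℤ → A, Function.Bijective fun q : A => F^[y] (phiCfg c q) x) ∧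
  (∀ (c : ℤ → A) (z : ℤ), x - (l : ℤ) ≤ z → z ≤ x + (r : ℤ) → z ≠ x →
    ∀ q q' : A, F^[y] (phiCfg c q) z = F^[y] (phiCfg c q') z)

/-- The characteristic set X_p of a cellular automaton. -/
def Xp {A : Type*} (p : ℕ) (F : (ℤ → A) → (ℤ → A)) : Set (ℝ × ℝ) :=
  {v : ℝ × ℝ | 0 ≤ v.2 ∧ ∃ k : ℕ, ∀ᶠ n : ℕ in atTop, ∃ (a : ℤ) (b : ℕ),
    (a : ℝ) = v.1 * (p : ℝ) ^ n ∧ (b : ℝ) = v.2 * (p : ℝ) ^ n ∧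
    propB F a b (p ^ (n - k)) (p ^ (n - k))}

/-- One-dimensional cellular automaton: shift-commuting and defined by a local rule
on a finite neighborhood. -/
def IsCA {A : Type*} (F : (ℤ → A) → (ℤ → A)) : Prop :=
  (∀ (c : ℤ → A) (z x : ℤ), F (fun i => c (i - z)) x = F c (x - z)) ∧
  ∃ N : Finset ℤ, ∀ (c c' : ℤ → A) (x : ℤ),
    (∀ n ∈ N, c (x + n) = c' (x + n)) → F c x = F c' x

/-- Configuration `c` with cell `z` replaced by `q`. -/
def pertCfg {A : Type*} (c : ℤ → A) (z : ℤ) (q : A) : ℤ → A :=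
  fun i => if i = z then q else c i

lemma pertCfg_self {A : Type*} (c : ℤ → A) (z : ℤ) : pertCfg c z (c z) = c := by
  funext i
  simp only [pertCfg]
  split <;> simp_all

lemma iter_shift {A : Type*} (F : (ℤ → A) → (ℤ → A))
    (hF : ∀ (c : ℤ → A) (z x : ℤ), F (fun i => c (i - z)) x = F c (x - z))
    (b : ℕ) : ∀ (c : ℤ → A) (z x : ℤ), F^[b] (fun i => c (i - z)) x = F^[b] c (x - z) := by
  induction b with
  | zero => intro c z x; simp
  | succ b ih =>
    intro c z x
    rw [Function.iterate_succ_apply, Function.iterate_succ_apply]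
    have : F (fun i => c (i - z)) = fun i => F c (i - z) := funext fun i => hF c z i
    rw [this, ih]

lemma propB_shift {A : Type*} (F : (ℤ → A) → (ℤ → A))
    (hF : ∀ (c : ℤ → A) (z x : ℤ), F (fun i => c (i - z)) x = F c (x - z))
    {a : ℤ} {b l r : ℕ} (hB : propB F a b l r) (z : ℤ) :
    (∀ c : ℤ → A, Function.Bijective fun q : A => F^[b] (pertCfg c z q) (a + z)) ∧
    (∀ (c : ℤ → A) (w : ℤ), a + z - (l : ℤ) ≤ w → w ≤ a + z + (r : ℤ) → w ≠ a + z →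
      ∀ q q' : A, F^[b] (pertCfg c z q) w = F^[b] (pertCfg c z q') w) := by
  have key : ∀ (c : ℤ → A) (q : A) (w : ℤ),
      F^[b] (pertCfg c z q) w = F^[b] (phiCfg (fun j => c (j + z)) q) (w - z) := by
    intro c q w
    have hcfg : pertCfg c z q = fun i => (phiCfg (fun j => c (j + z)) q) (i - z) := by
      funext i
      simp only [pertCfg, phiCfg]
      rcases eq_or_ne i z with h | h
      · simp [h]
      · rw [if_neg h, if_neg (by omega)]
        congr 1; omega
    rw [hcfg, iter_shift F hF]
  constructor
  · intro c
    have := hB.1 (fun j => c (j + z))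
    have heq : (fun q : A => F^[b] (pertCfg c z q) (a + z))
        = fun q : A => F^[b] (phiCfg (fun j => c (j + z)) q) a := by
      funext q; rw [key, add_sub_cancel_right]
    rw [heq]; exact this
  · intro c w h1 h2 h3 q q'
    rw [key, key]
    exact hB.2 (fun j => c (j + z)) (w - z) (by omega) (by omega) (by omega) q q'

lemma word_lemma {A : Type*} [Nonempty A] (F : (ℤ → A) → (ℤ → A))
    (hF : ∀ (c : ℤ → A) (z x : ℤ), F (fun i => c (i - z)) x = F c (x - z))
    {a : ℤ} {b l r : ℕ} (hB : propB F a b l r) :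
    ∀ (L : ℕ), L ≤ l → ∀ w : ℕ → A, ∃ c : ℤ → A,
      ∀ j : ℕ, j ≤ L → F^[b] c (a + (j : ℤ)) = w j := by
  intro L
  induction L with
  | zero =>
    intro _ w
    obtain ⟨q, hq⟩ := ((propB_shift F hF hB 0).1 (Classical.arbitrary _)).2 (w 0)
    refine ⟨pertCfg (Classical.arbitrary _) 0 q, ?_⟩
    intro j hj
    interval_cases j
    simpa using hq
  | succ L ih =>
    intro hL w
    obtain ⟨c, hc⟩ := ih (le_trans (Nat.le_succ L) hL) w
    obtain ⟨q, hq⟩ := ((propB_shift F hF hB ((L : ℤ) + 1)).1 c).2 (w (L + 1))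
    refine ⟨pertCfg c ((L : ℤ) + 1) q, ?_⟩
    intro j hj
    rcases Nat.lt_or_ge j (L + 1) with h | h
    · have hj' : j ≤ L := Nat.lt_succ_iff.mp h
      have hl : (L : ℤ) + 1 ≤ (l : ℤ) := by exact_mod_cast hL
      have hconst := (propB_shift F hF hB ((L : ℤ) + 1)).2 c (a + (j : ℤ))
        (by omega) (by omega) (by omega) q (c ((L : ℤ) + 1))
      rw [hconst, pertCfg_self]
      exact hc j hj'
    · have : j = L + 1 := le_antisymm hj h
      subst this
      have hcast : a + ((L + 1 : ℕ) : ℤ) = a + ((L : ℤ) + 1) := by push_cast; ring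
      rw [hcast]
      exact hq

theorem stmt19 {A : Type*} [Fintype A] [Nontrivial A] (F : (ℤ → A) → (ℤ → A))
    (hF : IsCA F) (p : ℕ) (hp : 2 ≤ p) (x₁ x₂ y : ℝ)
    (h1 : (x₁, y) ∈ Xp p F) (h2 : (x₂, y) ∈ Xp p F) (hy : 0 < y) (hx : x₁ ≠ x₂) :
    Function.Surjective F := by
  obtain ⟨hshift, N, hloc⟩ := hF
  obtain ⟨-, k, hev⟩ := h1
  -- Step 1: approximate any configuration on any window
  have approx : ∀ (d : ℤ → A) (m : ℕ), ∃ c : ℤ → A,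
      ∀ z : ℤ, -((m : ℤ)) ≤ z → z ≤ m → F c z = d z := by
    intro d m
    obtain ⟨n, ⟨a, b, ha, hb, hB⟩, hn⟩ :=
      (hev.and (eventually_ge_atTop (k + (2 * m + 1)))).exists
    -- 2 * m ≤ p ^ (n - k)
    have hl : 2 * m ≤ p ^ (n - k) := by
      have h1 : 2 * m + 1 ≤ n - k := by omega
      have h2 : n - k < 2 ^ (n - k) := Nat.lt_two_pow_self (n := n - k)
      have h3 : 2 ^ (n - k) ≤ p ^ (n - k) := Nat.pow_le_pow_left hp _
      omega
    -- b ≥ 1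
    have hb1 : 1 ≤ b := by
      by_contra h
      have : b = 0 := by omega
      subst this
      have hppos : (0 : ℝ) < (p : ℝ) ^ n := by positivity
      have : (0 : ℝ) < y * (p : ℝ) ^ n := by positivity
      rw [← hb] at this
      simp at this
    obtain ⟨c, hc⟩ := word_lemma F hshift hB (2 * m) hl (fun j => d ((j : ℤ) - m))
    obtain ⟨b', rfl⟩ : ∃ b', b = b' + 1 := ⟨b - 1, by omega⟩
    refine ⟨fun i => (F^[b'] c) (i - (-(a + m))), fun z hz1 hz2 => ?_⟩
    rw [hshift]
    have hj : ((z + m).toNat : ℤ) = z + m := Int.toNat_of_nonneg (by omega)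
    have hjle : (z + m).toNat ≤ 2 * m := by omega
    have := hc (z + m).toNat hjle
    rw [Function.iterate_succ_apply'] at this
    have harg : z - -(a + (m : ℤ)) = a + (((z + m).toNat : ℕ) : ℤ) := by
      rw [hj]; ring
    rw [harg, this, hj]
    congr 1
    ring
  -- Step 2: topology and compactness
  letI : TopologicalSpace A := ⊥
  haveI : DiscreteTopology A := ⟨rfl⟩
  have hcont : Continuous F := by
    apply continuous_pi
    intro x
    apply IsLocallyConstant.continuous
    rw [IsLocallyConstant.iff_exists_open]
    intro c
    refine ⟨⋂ n ∈ N, (fun c' : ℤ → A => c' (x + n)) ⁻¹' {c (x + n)}, ?_, ?_, ?_⟩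
    · exact isOpen_biInter_finset fun n _ =>
        (continuous_apply (x + n)).isOpen_preimage _ (isOpen_discrete _)
    · simp
    · intro c' hc'
      simp only [Set.mem_iInter, Set.mem_preimage, Set.mem_singleton_iff] at hc'
      exact hloc c' c x hc'
  have hclosed : IsClosed (Set.range F) := (isCompact_range hcont).isClosed
  intro d
  choose seq hseq using approx d
  have htend : Tendsto (fun m => F (seq m)) atTop (nhds d) := by
    rw [tendsto_pi_nhds]
    intro z
    apply tendsto_const_nhds.congr'
    filter_upwards [eventually_ge_atTop z.natAbs] with m hm
    exact (hseq m z (by omega) (by omega)).symm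
  exact hclosed.mem_of_tendsto htend (Eventually.of_forall fun m => Set.mem_range_self _)
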